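/- For every α > 0 there exists a sequence (a_n)_{n≥1} of strictly positive real numbers with Σ_{n≥1} a_n² < ∞ satisfying the self-similar coupling conditions c_n a_n a_{n+1} = a_n + c_{n−1} a_{n−1}² for all n ≥ 1 (with the convention a_0 = 0), where c_n = 2^{αn}. -/

import Mathlib

/-!
With `x = 2 ^ α` and `a n = x * z n / x ^ n`, the coupling conditions become the autonomous
recurrence `z (n + 2) * z (n + 1) = z (n + 1) + G * z n ^ 2` with `G = x ^ 2 > 1` and `z 0 = 0`;
this forces `z 2 = 1` and leaves `s = z 1` as the only parameter. Summability of `a n ^ 2` is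
summability of `G⁻ⁿ z n ^ 2`, whose partial sums telescope to `G⁻ⁿ z n ^ 2 z (n + 1)`. For a
nondecreasing orbit this dominates `w ^ 3` with `w = G^(-n/3) z n`, while the `n`-th summand is
`G^(-n/3) w ^ 2`; so the cube roots of the partial sums grow by at most `G^(-n/3)` per step and
stay bounded.

A nondecreasing orbit is found by shooting in `s`. Once an orbit descends, `z (n + 2) ≤ z (n + 1)`,
it descends strictly two steps later, with a strict ascent in between. Let `S` be the set of `s`
whose orbit never descends from an odd to the next even index: it contains small `s`, lies in
`(0, 1]` and is closed, so it contains `s₀ = sup S`, and at `s₀` these odd ascents are strict.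
A descent from an even index at `s₀` would, by continuity in `s`, persist for `s` slightly above
`s₀` together with the finitely many strict ascents before it, and put such `s` in `S`.
-/

open Filter Topology

namespace Stmt5

noncomputable def orbit (G s : ℝ) : ℕ → ℝ
  | 0 => 0
  | 1 => s
  | n + 2 => 1 + G * orbit G s n ^ 2 / orbit G s (n + 1)

section Orbit

variable {G s : ℝ}

@[simp] lemma orbit_zero : orbit G s 0 = 0 := rfl

@[simp] lemma orbit_one : orbit G s 1 = s := rfl

lemma orbit_add_two (n : ℕ) :
    orbit G s (n + 2) = 1 + G * orbit G s n ^ 2 / orbit G s (n + 1) := rfl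

@[simp] lemma orbit_two : orbit G s 2 = 1 := by simp [orbit_add_two]

lemma orbit_succ_pos (hG : 0 ≤ G) (hs : 0 < s) : ∀ n, 0 < orbit G s (n + 1)
  | 0 => hs
  | n + 1 => add_pos_of_pos_of_nonneg one_pos <|
      div_nonneg (mul_nonneg hG (sq_nonneg _)) (orbit_succ_pos hG hs n).le

lemma orbit_add_two_mul (hG : 0 ≤ G) (hs : 0 < s) (n : ℕ) :
    orbit G s (n + 2) * orbit G s (n + 1) = orbit G s (n + 1) + G * orbit G s n ^ 2 := by
  have := (orbit_succ_pos hG hs n).ne'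
  rw [orbit_add_two]
  field_simp

lemma continuousAt_orbit (hG : 0 ≤ G) (hs : 0 < s) :
    ∀ n, ContinuousAt (fun u => orbit G u n) s
  | 0 => continuousAt_const
  | 1 => continuousAt_id
  | n + 2 => continuousAt_const.add <|
      (continuousAt_const.mul ((continuousAt_orbit hG hs n).pow 2)).div
        (continuousAt_orbit hG hs (n + 1)) (orbit_succ_pos hG hs n).ne'

lemma orbit_trap (hG : 1 ≤ G) (hs : 0 < s) {n : ℕ}
    (h : orbit G s (n + 2) ≤ orbit G s (n + 1)) :
    orbit G s (n + 2) < orbit G s (n + 3) ∧ orbit G s (n + 4) < orbit G s (n + 3) := by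
  have hG0 : 0 ≤ G := zero_le_one.trans hG
  have he := orbit_succ_pos hG0 hs n
  have ho := orbit_succ_pos hG0 hs (n + 1)
  have hw := orbit_succ_pos hG0 hs (n + 2)
  have hrec₁ := orbit_add_two_mul hG0 hs (n + 1)
  have hrec₂ := orbit_add_two_mul hG0 hs (n + 2)
  set e := orbit G s (n + 1)
  set o := orbit G s (n + 2)
  set w := orbit G s (n + 3)
  have how : o < w := by nlinarith
  refine ⟨how, ?_⟩
  have hGe : G * e ^ 2 = (w - 1) * o := by linarith
  have hoe' : o ^ 2 ≤ e ^ 2 := pow_le_pow_left₀ ho.le h 2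
  have key : G * o ^ 2 * o < w * (w - 1) * o :=
    calc G * o ^ 2 * o ≤ G * e ^ 2 * o := by gcongr
      _ < G * e ^ 2 * w := by gcongr
      _ = w * (w - 1) * o := by rw [hGe]; ring
  have key' : G * o ^ 2 < w * (w - 1) := lt_of_mul_lt_mul_right key ho.le
  refine lt_of_mul_lt_mul_right (a := w) ?_ hw.le
  nlinarith

lemma orbit_descent_persists (hG : 1 ≤ G) (hs : 0 < s) {n : ℕ}
    (h : orbit G s (n + 2) ≤ orbit G s (n + 1)) :
    ∀ i, orbit G s (n + 2 * i + 2) ≤ orbit G s (n + 2 * i + 1)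
  | 0 => h
  | i + 1 => (orbit_trap hG hs (orbit_descent_persists hG hs h i)).2.le

lemma orbit_odd_lt_even_of_descent (hG : 1 ≤ G) (hs : 0 < s) {m : ℕ}
    (h : orbit G s (2 * m + 3) ≤ orbit G s (2 * m + 2)) {k : ℕ} (hk : m < k) :
    orbit G s (2 * k + 1) < orbit G s (2 * k + 2) := by
  obtain ⟨i, rfl⟩ := Nat.exists_eq_add_of_lt hk
  convert (orbit_trap hG hs (orbit_descent_persists hG hs (n := 2 * m + 1) h i)).1 using 2 <;> ring

end Orbit

def shootingSet (G : ℝ) : Set ℝ :=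
  {s | 0 < s ∧ ∀ k : ℕ, orbit G s (2 * k + 1) ≤ orbit G s (2 * k + 2)}

section Shooting

variable {G s : ℝ}

lemma le_one_of_mem_shootingSet (hs : s ∈ shootingSet G) : s ≤ 1 := by
  simpa using hs.2 0

lemma mem_shootingSet_of_small (hG : 1 ≤ G) (hs : 0 < s) (hs1 : s ≤ 1)
    (hsG : G * s ^ 2 ≤ 1 / 8) : s ∈ shootingSet G := by
  have hG0 : 0 ≤ G := zero_le_one.trans hG
  set t := G * s ^ 2 with ht
  have ht0 : 0 ≤ t := by positivity
  have h₃ : orbit G s 3 = 1 + t := by simp [orbit_add_two, ht]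
  have h₄ : orbit G s 4 * (1 + t) = 1 + t + G := by
    simpa [h₃] using orbit_add_two_mul hG0 hs 2
  have h₅ : orbit G s 5 * orbit G s 4 = orbit G s 4 + G * (1 + t) ^ 2 := by
    simpa [h₃] using orbit_add_two_mul hG0 hs 3
  have hz₄ : 0 < orbit G s 4 := orbit_succ_pos hG0 hs 3
  have h34 : orbit G s 3 ≤ orbit G s 4 := by rw [h₃]; nlinarith
  have hcube : (1 + t) ^ 3 ≤ orbit G s 4 := by
    have : (1 + t) ^ 4 ≤ (9 / 8) ^ 4 := pow_le_pow_left₀ (by positivity) (by linarith) 4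
    refine le_of_mul_le_mul_right (a := 1 + t) ?_ (by positivity)
    nlinarith
  have h54 : orbit G s 5 ≤ orbit G s 4 := by
    have : G * (1 + t) ^ 2 ≤ orbit G s 4 * (orbit G s 4 - 1) := by
      refine le_of_mul_le_mul_right (a := 1 + t) ?_ (by positivity)
      nlinarith
    refine le_of_mul_le_mul_right (a := orbit G s 4) ?_ hz₄
    nlinarith
  refine ⟨hs, fun k => ?_⟩
  match k with
  | 0 => simpa using hs1
  | 1 => exact h34
  | k + 2 => exact (orbit_odd_lt_even_of_descent hG hs (m := 1) h54 (by omega)).le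

lemma shootingSet_nonempty (hG : 1 ≤ G) : (shootingSet G).Nonempty := by
  have hG0 : 0 < G := zero_lt_one.trans_le hG
  refine ⟨1 / (4 * G), mem_shootingSet_of_small hG (by positivity) ?_ ?_⟩
  · rw [div_le_one (by positivity)]
    linarith
  · calc G * (1 / (4 * G)) ^ 2 = 1 / (16 * G) := by field_simp; ring
      _ ≤ 1 / 8 := by rw [div_le_div_iff₀ (by positivity) (by norm_num)]; linarith

lemma bddAbove_shootingSet : BddAbove (shootingSet G) :=
  ⟨1, fun _ hs => le_one_of_mem_shootingSet hs⟩

lemma sSup_mem_shootingSet (hG : 1 ≤ G) : sSup (shootingSet G) ∈ shootingSet G := by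
  obtain ⟨s, hs⟩ := shootingSet_nonempty hG
  have hpos : 0 < sSup (shootingSet G) := hs.1.trans_le (le_csSup bddAbove_shootingSet hs)
  have hcl := csSup_mem_closure ⟨s, hs⟩ (bddAbove_shootingSet (G := G))
  have hcont := continuousAt_orbit (zero_le_one.trans hG) hpos
  exact ⟨hpos, fun k => (hcont _).continuousWithinAt.closure_le hcl (hcont _).continuousWithinAt
    fun _ hs => hs.2 k⟩

lemma orbit_odd_lt_even_of_mem (hG : 1 ≤ G) (hs : s ∈ shootingSet G) (k : ℕ) :
    orbit G s (2 * k + 1) < orbit G s (2 * k + 2) := by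
  refine (hs.2 k).lt_of_ne fun heq => ?_
  have hnext : orbit G s (2 * k + 3) ≤ orbit G s (2 * k + 4) := hs.2 (k + 1)
  exact hnext.not_gt (orbit_trap hG hs.1 (n := 2 * k) heq.ge).2

lemma orbit_even_le_odd_sSup (hG : 1 ≤ G) (k : ℕ) :
    orbit G (sSup (shootingSet G)) (2 * k + 2) ≤ orbit G (sSup (shootingSet G)) (2 * k + 3) := by
  set s₀ := sSup (shootingSet G)
  have hs₀ := sSup_mem_shootingSet hG
  by_contra! hlt
  have hcont := continuousAt_orbit (zero_le_one.trans hG) hs₀.1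
  have hstrict : ∀ᶠ u in 𝓝 s₀, ∀ j ∈ Finset.range (k + 1),
      orbit G u (2 * j + 1) < orbit G u (2 * j + 2) :=
    (eventually_all_finset _).2 fun j _ =>
      (hcont _).eventually_lt (hcont _) (orbit_odd_lt_even_of_mem hG hs₀ j)
  have hnear : ∀ᶠ u in 𝓝 s₀, u ∈ shootingSet G := by
    filter_upwards [eventually_gt_nhds hs₀.1, hstrict, (hcont _).eventually_lt (hcont _) hlt]
      with u hu hstrict hdescent
    refine ⟨hu, fun j => ?_⟩
    rcases le_or_gt j k with hj | hj
    · exact (hstrict j (Finset.mem_range.2 (Nat.lt_succ_of_le hj))).le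
    · exact (orbit_odd_lt_even_of_descent hG hu hdescent.le hj).le
  obtain ⟨u, hu, huS⟩ := hnear.exists_gt
  exact hu.not_ge (le_csSup bddAbove_shootingSet huS)

lemma monotone_orbit_sSup (hG : 1 ≤ G) :
    Monotone fun n => orbit G (sSup (shootingSet G)) (n + 1) := by
  refine monotone_nat_of_le_succ fun n => ?_
  rcases Nat.even_or_odd' n with ⟨k, rfl | rfl⟩
  · exact (orbit_odd_lt_even_of_mem hG (sSup_mem_shootingSet hG) k).le
  · exact orbit_even_le_odd_sSup hG k

end Shooting

lemma le_add_cube_of_le_cube_add_mul_sq {p q w S : ℝ} (hp : 0 ≤ p) (hq : 0 ≤ q) (hw : 0 ≤ w)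
    (hS : S ≤ p ^ 3 + q * w ^ 2) (hwS : w ^ 3 ≤ S) : S ≤ (p + q) ^ 3 := by
  rcases le_or_gt w (p + q) with h | h
  · calc S ≤ p ^ 3 + q * w ^ 2 := hS
      _ ≤ p ^ 3 + q * (p + q) ^ 2 := by gcongr
      _ ≤ (p + q) ^ 3 := by nlinarith [mul_nonneg hp hq, mul_nonneg (mul_nonneg hp hq) hq]
  · have hpw : p ^ 2 ≤ w ^ 2 := pow_le_pow_left₀ hp (by linarith) 2
    nlinarith [mul_le_mul_of_nonneg_right hpw hp,
      mul_lt_mul_of_pos_left (show p < w - q by linarith) (pow_pos (show 0 < w by linarith) 2)]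

section Summability

variable {G : ℝ} {z : ℕ → ℝ}

lemma sum_range_inv_pow_mul_sq (hG : G ≠ 0) (h0 : z 0 = 0)
    (hrec : ∀ n, z (n + 2) * z (n + 1) = z (n + 1) + G * z n ^ 2) (n : ℕ) :
    ∑ k ∈ Finset.range n, G⁻¹ ^ (k + 1) * z (k + 1) ^ 2 = G⁻¹ ^ n * z n ^ 2 * z (n + 1) := by
  induction n with
  | zero => simp [h0]
  | succ n ih =>
    rw [Finset.sum_range_succ, ih, pow_succ]
    linear_combination (-(G⁻¹ ^ n * G⁻¹ * z (n + 1))) * hrec n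
      - G⁻¹ ^ n * z n ^ 2 * z (n + 1) * inv_mul_cancel₀ hG

lemma summable_inv_pow_mul_sq_of_monotone (hG : 1 < G) (h0 : z 0 = 0)
    (hrec : ∀ n, z (n + 2) * z (n + 1) = z (n + 1) + G * z n ^ 2)
    (hz₁ : 0 ≤ z 1) (hmono : Monotone fun n => z (n + 1)) :
    Summable fun n => G⁻¹ ^ (n + 1) * z (n + 1) ^ 2 := by
  have hG0 : 0 < G := zero_lt_one.trans hG
  have hz : ∀ n, 0 ≤ z (n + 1) := fun n => hz₁.trans (hmono n.zero_le)
  set r := G ^ (-(1 / 3 : ℝ))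
  have hr0 : 0 < r := Real.rpow_pos_of_pos hG0 _
  have hr1 : r < 1 := Real.rpow_lt_one_of_one_lt_of_neg hG (by norm_num)
  have hr3 : r ^ 3 = G⁻¹ := by
    rw [← Real.rpow_natCast, ← Real.rpow_mul hG0.le]
    norm_num [Real.rpow_neg_one]
  have hpartial : ∀ n, ∑ k ∈ Finset.range n, G⁻¹ ^ (k + 1) * z (k + 1) ^ 2
      ≤ (∑ k ∈ Finset.range n, r ^ (k + 1)) ^ 3 := by
    intro n
    induction n with
    | zero => simp
    | succ n ih =>
      rw [Finset.sum_range_succ (fun k => r ^ (k + 1))]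
      refine le_add_cube_of_le_cube_add_mul_sq (w := r ^ (n + 1) * z (n + 1))
        (Finset.sum_nonneg fun _ _ => by positivity) (by positivity)
        (mul_nonneg (by positivity) (hz n)) ?_ ?_
      · have hlast : G⁻¹ ^ (n + 1) * z (n + 1) ^ 2
            = r ^ (n + 1) * (r ^ (n + 1) * z (n + 1)) ^ 2 := by
          rw [← hr3]; ring
        rw [Finset.sum_range_succ, hlast]
        exact add_le_add_left ih _
      · rw [sum_range_inv_pow_mul_sq hG0.ne' h0 hrec, ← hr3]
        have := mul_le_mul_of_nonneg_left (hmono n.le_succ)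
          (by positivity : 0 ≤ (r ^ 3) ^ (n + 1) * z (n + 1) ^ 2)
        linear_combination this
  have hgeom : ∀ n, ∑ k ∈ Finset.range n, r ^ (k + 1) ≤ 1 / (1 - r) := fun n =>
    calc ∑ k ∈ Finset.range n, r ^ (k + 1) ≤ ∑ k ∈ Finset.range n, r ^ k :=
          Finset.sum_le_sum fun k _ => pow_le_pow_of_le_one hr0.le hr1.le k.le_succ
      _ ≤ 1 / (1 - r) := by simpa using geom_sum_Ico_le_of_lt_one (m := 0) (n := n) hr0.le hr1
  exact summable_of_sum_range_le (fun n => by have := hz n; positivity) fun n =>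
    (hpartial n).trans (pow_le_pow_left₀ (by positivity) (hgeom n) 3)

end Summability

lemma exists_summable_orbit {G : ℝ} (hG : 1 < G) :
    ∃ z : ℕ → ℝ, z 0 = 0 ∧ (∀ n, 0 < z (n + 1)) ∧
      (∀ n, z (n + 2) * z (n + 1) = z (n + 1) + G * z n ^ 2) ∧
      Summable fun n => G⁻¹ ^ (n + 1) * z (n + 1) ^ 2 := by
  have hG0 : 0 ≤ G := zero_le_one.trans hG.le
  have hs₀ := (sSup_mem_shootingSet hG.le).1
  have hrec := orbit_add_two_mul hG0 hs₀
  exact ⟨orbit G (sSup (shootingSet G)), orbit_zero, orbit_succ_pos hG0 hs₀, hrec,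
    summable_inv_pow_mul_sq_of_monotone hG orbit_zero hrec hs₀.le (monotone_orbit_sSup hG.le)⟩

theorem self_similar_exists (α : ℝ) (hα : 0 < α) :
    ∃ a : ℕ → ℝ,
      a 0 = 0 ∧
      (∀ n : ℕ, 1 ≤ n → 0 < a n) ∧
      (Summable fun n => (a (n + 1)) ^ 2) ∧
      (∀ n : ℕ, 1 ≤ n →
        (2 : ℝ) ^ (α * (n : ℝ)) * a n * a (n + 1)
          = a n + (2 : ℝ) ^ (α * ((n : ℝ) - 1)) * (a (n - 1)) ^ 2) := by
  set x : ℝ := 2 ^ α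
  have hx : 1 < x := Real.one_lt_rpow one_lt_two hα
  have hx0 : 0 < x := zero_lt_one.trans hx
  have hx0' : x ≠ 0 := hx0.ne'
  have hc : ∀ t : ℝ, (2 : ℝ) ^ (α * t) = x ^ t := Real.rpow_mul zero_le_two α
  obtain ⟨z, hz0, hzpos, hrec, hsum⟩ := exists_summable_orbit (one_lt_pow₀ hx two_ne_zero)
  refine ⟨fun n => x * z n / x ^ n, by simp [hz0], fun n hn => ?_, ?_, fun n hn => ?_⟩
  · obtain ⟨m, rfl⟩ := Nat.exists_eq_add_of_le' hn
    have := hzpos m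
    positivity
  · refine (hsum.mul_left (x ^ 2)).congr fun n => ?_
    rw [inv_pow]
    field_simp
    ring
  · obtain ⟨m, rfl⟩ := Nat.exists_eq_add_of_le' hn
    rw [hc, hc, Nat.add_sub_cancel, show ((m + 1 : ℕ) : ℝ) - 1 = m by push_cast; ring,
      Real.rpow_natCast, Real.rpow_natCast]
    field_simp
    linear_combination x ^ (2 * m + 2) * hrec m

end Stmt5
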